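/- Let X be a smooth complex projective surface with h⁰(−K_X) = 0, let C ⊂ X be an integral curve of geometric genus g(C), and let p ∈ C be a point with m := mult_p(C) ≥ 2. Let π : X̃ → X be the blow-up of X at p with exceptional divisor E, and let C̃ = π*(C) − mE be the strict transform of C. If C̃² ≥ μ(X̃, g(C̃)), then C² ≥ μ(X, g(C)), where μ(Y, g) := min{ K_Y² + χ(O_Y) − 3, K_Y² − 3·c₂(Y) + 2 − 2g } for a smooth projective surface Y. -/
import Mathlib


/-- Abstract data of a smooth complex projective surface `X` over `ℂ`:
the group of ℚ-divisors, the intersection pairing, the canonical divisor,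
cohomological invariants, and the relevant classes of curves on `X`. -/
structure SmoothProjectiveSurface where
  /-- the group of ℚ-divisors on the surface -/
  Div : Type
  [divAddCommGroup : AddCommGroup Div]
  [divModule : Module ℚ Div]
  /-- the intersection pairing `D·E` -/
  inter : Div → Div → ℚ
  inter_comm : ∀ D E, inter D E = inter E D
  inter_add_left : ∀ D₁ D₂ E, inter (D₁ + D₂) E = inter D₁ E + inter D₂ E
  inter_smul_left : ∀ (a : ℚ) (D E : Div), inter (a • D) E = a * inter D E
  /-- the canonical divisor `K_X` -/
  K : Div
  /-- `h⁰(D) = dim H⁰(X, O_X(D))` -/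
  h0 : Div → ℕ
  /-- `h¹(D) = dim H¹(X, O_X(D))` -/
  h1 : Div → ℕ
  /-- `h²(D) = dim H²(X, O_X(D))` -/
  h2 : Div → ℕ
  /-- the Euler characteristic `χ(O_X(D))` of the line bundle `O_X(D)` -/
  chiDiv : Div → ℤ
  /-- the second Chern number `c₂(X)`, i.e. the topological Euler characteristic of `X` -/
  c2 : ℤ
  /-- the holomorphic Euler characteristic `χ(O_X)` -/
  chiO : ℤ
  /-- the Hodge number `h^{1,1}(X)` -/
  h11 : ℕ
  /-- the points of the surface -/
  Pt : Type
  /-- `mult p C` is the multiplicity of the curve `C` at the point `p` -/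
  mult : Pt → Div → ℕ
  /-- `mem p C` means the point `p` lies on the curve `C` -/
  mem : Pt → Div → Prop
  /-- effective divisors -/
  IsEffective : Div → Prop
  /-- nef divisors -/
  IsNef : Div → Prop
  /-- pseudo-effective divisors -/
  IsPseudoEffective : Div → Prop
  /-- integral (reduced and irreducible) curves -/
  IsIntegralCurve : Div → Prop
  /-- reduced curves: effective divisors all of whose irreducible components
  appear with multiplicity one -/
  IsReducedCurve : Div → Prop
  /-- smooth irreducible curves -/
  IsSmoothCurve : Div → Prop
  /-- `IsComponent E C` : `E` is an irreducible component of the curve `C` -/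
  IsComponent : Div → Div → Prop
  /-- linear equivalence of divisors -/
  LinEquiv : Div → Div → Prop
  /-- the geometric genus of an integral curve (the genus of its normalization) -/
  geomGenus : Div → ℤ
  /-- the arithmetic genus of a curve -/
  arithGenus : Div → ℤ

attribute [instance] SmoothProjectiveSurface.divAddCommGroup
  SmoothProjectiveSurface.divModule

/-- The blow-up `π : X̃ → X` of a smooth projective surface `X` at a point `p`,
with exceptional divisor `E`, recorded together with the standard facts
`K_{X̃} = π*K_X + E`, `E² = -1`, `π*D·E = 0` and `(π*D)·(π*D') = D·D'`. -/
structure Blowup (X : SmoothProjectiveSurface) (p : X.Pt) where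
  /-- the blown-up surface `X̃` -/
  total : SmoothProjectiveSurface
  /-- the pullback `π*` of divisors -/
  pullback : X.Div → total.Div
  pullback_add : ∀ D D', pullback (D + D') = pullback D + pullback D'
  /-- the exceptional divisor `E` of the blow-up -/
  exc : total.Div
  /-- `K_{X̃} = π*K_X + E` -/
  K_eq : total.K = pullback X.K + exc
  /-- `E² = -1` -/
  exc_sq : total.inter exc exc = -1
  /-- `π*D · E = 0` for every divisor `D` on `X` -/
  pullback_inter_exc : ∀ D, total.inter (pullback D) exc = 0
  /-- `(π*D)·(π*D') = D·D'` for all divisors `D, D'` on `X` -/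
  pullback_inter : ∀ D D', total.inter (pullback D) (pullback D') = X.inter D D'
  /-- `c₂(X̃) = c₂(X) + 1` -/
  c2_eq : total.c2 = X.c2 + 1
  /-- `χ(O_{X̃}) = χ(O_X)` -/
  chiO_eq : total.chiO = X.chiO

/-- `μ(Y, g) = min{ K_Y² + χ(O_Y) − 3, K_Y² − 3·c₂(Y) + 2 − 2g }`. -/
def mu (Y : SmoothProjectiveSurface) (g : ℤ) : ℚ :=
  min (Y.inter Y.K Y.K + (Y.chiO : ℚ) - 3)
    (Y.inter Y.K Y.K - 3 * (Y.c2 : ℚ) + 2 - 2 * (g : ℚ))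

namespace SmoothProjectiveSurface

theorem inter_add_right (X : SmoothProjectiveSurface) (D E₁ E₂ : X.Div) :
    X.inter D (E₁ + E₂) = X.inter D E₁ + X.inter D E₂ := by
  rw [X.inter_comm, X.inter_add_left, X.inter_comm E₁, X.inter_comm E₂]

theorem inter_smul_right (X : SmoothProjectiveSurface) (a : ℚ) (D E : X.Div) :
    X.inter D (a • E) = a * X.inter D E := by
  rw [X.inter_comm, X.inter_smul_left, X.inter_comm]

theorem inter_sub_left (X : SmoothProjectiveSurface) (D₁ D₂ E : X.Div) :
    X.inter (D₁ - D₂) E = X.inter D₁ E - X.inter D₂ E := by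
  have : D₁ - D₂ = D₁ + (-1 : ℚ) • D₂ := by
    rw [neg_one_smul]; abel
  rw [this, X.inter_add_left, X.inter_smul_left]; ring

theorem inter_sub_right (X : SmoothProjectiveSurface) (D E₁ E₂ : X.Div) :
    X.inter D (E₁ - E₂) = X.inter D E₁ - X.inter D E₂ := by
  rw [X.inter_comm, X.inter_sub_left, X.inter_comm E₁, X.inter_comm E₂]

end SmoothProjectiveSurface


/-- Let `X` be a smooth complex projective surface with `h⁰(−K_X) = 0`, let `C ⊂ X`
be an integral curve of geometric genus `g(C)`, and let `p ∈ C` with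
`m := mult_p(C) ≥ 2`. Let `π : X̃ → X` be the blow-up at `p` with exceptional
divisor `E` and let `C̃ = π*C − mE` be the strict transform of `C` (so
`g(C̃) = g(C)`). If `C̃² ≥ μ(X̃, g(C̃))` then `C² ≥ μ(X, g(C))`. -/
theorem sq_ge_mu_of_blowup (X : SmoothProjectiveSurface)
    (hK : X.h0 (-X.K) = 0)
    (C : X.Div) (hC : X.IsIntegralCurve C)    (p : X.Pt) (hp : X.mem p C) (hmult : 2 ≤ X.mult p C)
    (π : Blowup X p)
    (Ct : π.total.Div) (hCt : Ct = π.pullback C - (X.mult p C : ℚ) • π.exc)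
    (hgenus : π.total.geomGenus Ct = X.geomGenus C)
    (h : π.total.inter Ct Ct ≥ mu π.total (π.total.geomGenus Ct)) :
    X.inter C C ≥ mu X (X.geomGenus C) := by
  set m : ℚ := (X.mult p C : ℚ) with hm
  have hCt2 : π.total.inter Ct Ct = X.inter C C - m ^ 2 := by
    rw [hCt, π.total.inter_sub_left, π.total.inter_sub_right, π.total.inter_sub_right,
      π.total.inter_smul_left, π.total.inter_smul_left, π.total.inter_smul_right,
      π.total.inter_smul_right, π.pullback_inter, π.pullback_inter_exc,
      π.total.inter_comm π.exc, π.pullback_inter_exc, π.exc_sq]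
    ring
  have hK2 : π.total.inter π.total.K π.total.K = X.inter X.K X.K - 1 := by
    rw [π.K_eq, π.total.inter_add_left, π.total.inter_add_right, π.total.inter_add_right,
      π.pullback_inter, π.pullback_inter_exc, π.total.inter_comm π.exc,
      π.pullback_inter_exc, π.exc_sq]
    ring
  have hm4 : (4 : ℚ) ≤ m ^ 2 := by
    have h2 : (2 : ℚ) ≤ m := by rw [hm]; exact_mod_cast hmult
    nlinarith
  have hmu : mu X (X.geomGenus C) - 4 ≤ mu π.total (X.geomGenus C) := by
    unfold mu
    rw [hK2, π.c2_eq, π.chiO_eq]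
    push_cast
    apply le_min
    · calc mu X (X.geomGenus C) - 4 ≤ (X.inter X.K X.K + (X.chiO : ℚ) - 3) - 4 := by
            exact sub_le_sub_right (min_le_left _ _) 4
      _ ≤ _ := by linarith
    · calc mu X (X.geomGenus C) - 4 ≤
          (X.inter X.K X.K - 3 * (X.c2 : ℚ) + 2 - 2 * (X.geomGenus C : ℚ)) - 4 := by
            exact sub_le_sub_right (min_le_right _ _) 4
      _ ≤ _ := by linarith
  rw [hgenus, hCt2] at h
  linarith
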